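/- Let X be a finite-dimensional real normed vector space, let α > 0, let A : X × X → ℝ be a bilinear form with A(v,v) ≥ α‖v‖² for all v ∈ X, let B : X × X × X → ℝ be a trilinear map with B(w,v,v) = 0 for all w, v ∈ X, and let L : X → ℝ be a linear form. Suppose (w̄_n) is a sequence in X with w̄_n → w̄, and for each n the element u_n ∈ X satisfies A(u_n,φ) + B(w̄_n,u_n,φ) = L(φ) for all φ ∈ X, while u ∈ X satisfies A(u,φ) + B(w̄,u,φ) = L(φ) for all φ ∈ X. Then u_n → u in X. -/

import Mathlib

/-!
Subtracting the two linearized equations and testing with `e = uₙ - u`, the cancellation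
`B(wₙ, e, e) = 0` leaves `A(e, e) = B(w - wₙ, u, e)`. Coercivity then gives
`α ‖e‖ ≤ ‖B(w - wₙ, u, ·)‖`, and the right side tends to `0` because `w ↦ B(w, u, ·)` is a linear,
hence continuous, map on the finite-dimensional space `X`.
-/

open Filter

theorem LinearMap.apply_sub_sub_eq_of_solutions {R M : Type*} [CommRing R] [AddCommGroup M]
    [Module R M] (A : M →ₗ[R] M →ₗ[R] R) (B : M →ₗ[R] M →ₗ[R] M →ₗ[R] R) (L : M → R)
    {w₁ w₂ u₁ u₂ : M} (hB : ∀ v, B w₁ v v = 0)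
    (h₁ : ∀ φ, A u₁ φ + B w₁ u₁ φ = L φ) (h₂ : ∀ φ, A u₂ φ + B w₂ u₂ φ = L φ) :
    A (u₁ - u₂) (u₁ - u₂) = B (w₂ - w₁) u₂ (u₁ - u₂) := by
  set e := u₁ - u₂
  have hB₁ : B w₁ u₁ e = B w₁ u₂ e := by
    have := hB e
    rwa [map_sub (B w₁), LinearMap.sub_apply, sub_eq_zero] at this
  rw [map_sub A, LinearMap.sub_apply, map_sub B, LinearMap.sub_apply, LinearMap.sub_apply]
  linear_combination h₁ e - h₂ e - hB₁

theorem mul_norm_le_opNorm_of_mul_sq_le {E : Type*} [SeminormedAddCommGroup E] [NormedSpace ℝ E]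
    (f : E →L[ℝ] ℝ) {α : ℝ} {e : E} (h : α * ‖e‖ ^ 2 ≤ f e) : α * ‖e‖ ≤ ‖f‖ := by
  rcases (norm_nonneg e).eq_or_lt with he | he
  · simp [← he]
  · refine le_of_mul_le_mul_right ?_ he
    calc α * ‖e‖ * ‖e‖ = α * ‖e‖ ^ 2 := by ring
      _ ≤ f e := h
      _ ≤ ‖f e‖ := Real.le_norm_self _
      _ ≤ ‖f‖ * ‖e‖ := f.le_opNorm e

/-- Continuity of the fixed-point map: if `wbar_n → wbar` and `u_n` solves the linearized
problem with datum `wbar_n` while `u` solves it with datum `wbar`, then `u_n → u`. -/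
theorem stmt2
    {X : Type*} [NormedAddCommGroup X] [NormedSpace ℝ X] [FiniteDimensional ℝ X]
    (α : ℝ) (hα : 0 < α)
    (A : X →ₗ[ℝ] X →ₗ[ℝ] ℝ)
    (hA : ∀ v : X, α * ‖v‖ ^ 2 ≤ A v v)
    (B : X →ₗ[ℝ] X →ₗ[ℝ] X →ₗ[ℝ] ℝ)
    (hB : ∀ w v : X, B w v v = 0)
    (L : X →ₗ[ℝ] ℝ)
    (wb : ℕ → X) (wbar : X) (hw : Tendsto wb atTop (nhds wbar))
    (u : ℕ → X) (hu : ∀ (n : ℕ) (φ : X), A (u n) φ + B (wb n) (u n) φ = L φ)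
    (ulim : X) (hulim : ∀ φ : X, A ulim φ + B wbar ulim φ = L φ) :
    Tendsto u atTop (nhds ulim) := by
  let T : X →ₗ[ℝ] X →L[ℝ] ℝ :=
    (LinearMap.toContinuousLinearMap : (X →ₗ[ℝ] ℝ) ≃ₗ[ℝ] (X →L[ℝ] ℝ)).toLinearMap ∘ₗ B.flip ulim
  have hT : Tendsto (fun n ↦ T (wbar - wb n)) atTop (nhds 0) := by
    rw [← map_zero T]
    exact (T.continuous_of_finiteDimensional.tendsto 0).comp (by simpa using hw.const_sub wbar)
  have hbound (n : ℕ) : ‖u n - ulim‖ ≤ ‖T (wbar - wb n)‖ / α := by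
    rw [le_div_iff₀' hα]
    refine mul_norm_le_opNorm_of_mul_sq_le _ ((hA _).trans_eq ?_)
    exact A.apply_sub_sub_eq_of_solutions B L (hB (wb n)) (hu n) hulim
  rw [tendsto_iff_norm_sub_tendsto_zero]
  exact squeeze_zero (fun _ ↦ norm_nonneg _) hbound (by simpa using hT.norm.div_const α)
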